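/- Let Λ ⊆ {1,…,N} with |Λ| = K ≥ 1, and consider measurements y_p = e^{iφ_p} Σ_{k∈Λ} x_k A_p(:,k) + w_p, p = 1,…,P, where A_p ∈ ℝ^{M×N} has unit-norm columns with coherence μ_p, and |A_p(:,i)^T w_p| < ζ for all i, p. If P|x_max| − 2Pζ − (2K−1)(Σ_{p=1}^P μ_p)|x_max| > 0, where |x_max| = max_{k∈Λ}|x_k|, then max_{i∈Λ} Σ_{p=1}^P |A_p(:,i)^T y_p| > max_{i∉Λ} Σ_{p=1}^P |A_p(:,i)^T y_p|; hence the first support element selected by the PC-MP correlation rule lies in the true support Λ. -/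

import Mathlib

/-!
Correlating `y_p` with a column `A_p(:,j)` gives `e^{iφ_p} Σ_{k∈Λ} x_k ⟨A_p(:,j), A_p(:,k)⟩`
plus a noise term of size `< ζ`. Off the support every Gram entry is at most `μ_p`, so the
correlation is at most `K μ_p |x_max| + ζ`. At an index `k₀ ∈ Λ` where `|x_k₀| = |x_max|`, the
diagonal entry is `1` and the other `K - 1` entries are at most `μ_p`, so the correlation is at
least `|x_max| - (K - 1) μ_p |x_max| - ζ`. Summing over the packets, the hypothesis is exactly
the statement that the lower bound at `k₀` beats the upper bound off the support.
-/

open Complex Finset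

section Correlation

variable {m ι : Type*} [Fintype m] (A : Matrix m ι ℝ) (s : Finset ι) (x : ι → ℂ) (c : ℂ)
  (w : m → ℂ)

theorem correlation_eq_gram_add_noise (j : ι) :
    ∑ r, (A r j : ℂ) * (c * ∑ k ∈ s, x k * (A r k : ℂ) + w r) =
      c * ∑ k ∈ s, x k * ((∑ r, A r j * A r k : ℝ) : ℂ) + ∑ r, (A r j : ℂ) * w r := by
  simp only [mul_add, sum_add_distrib, mul_sum, ofReal_sum, ofReal_mul]
  rw [sum_comm]
  congr 1
  refine sum_congr rfl fun k _ => sum_congr rfl fun r _ => ?_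
  ring

theorem norm_sum_mul_ofReal_le {g : ι → ℝ} {μ X : ℝ} (hg : ∀ k ∈ s, |g k| ≤ μ)
    (hx : ∀ k ∈ s, ‖x k‖ ≤ X) :
    ‖∑ k ∈ s, x k * (g k : ℂ)‖ ≤ s.card * μ * X := by
  calc ‖∑ k ∈ s, x k * (g k : ℂ)‖ ≤ ∑ k ∈ s, ‖x k‖ * |g k| := by
        simpa only [norm_mul, norm_real, Real.norm_eq_abs] using
          norm_sum_le s fun k => x k * (g k : ℂ)
    _ ≤ ∑ _k ∈ s, X * μ := sum_le_sum fun k hk =>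
        mul_le_mul (hx k hk) (hg k hk) (abs_nonneg _) ((norm_nonneg _).trans (hx k hk))
    _ = s.card * μ * X := by rw [sum_const, nsmul_eq_mul]; ring

variable {μ X ζ : ℝ} {c} (hc : ‖c‖ = 1)
  (hμ : ∀ i j, i ≠ j → |∑ r, A r i * A r j| ≤ μ) (hx : ∀ k ∈ s, ‖x k‖ ≤ X)
include hc hμ hx

theorem norm_correlation_le_of_notMem {i : ι} (hi : i ∉ s)
    (hw : ‖∑ r, (A r i : ℂ) * w r‖ ≤ ζ) :
    ‖∑ r, (A r i : ℂ) * (c * ∑ k ∈ s, x k * (A r k : ℂ) + w r)‖ ≤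
      s.card * μ * X + ζ := by
  have hgram := norm_sum_mul_ofReal_le s x (fun k hk => hμ i k fun h => hi (h ▸ hk)) hx
  rw [correlation_eq_gram_add_noise]
  refine (norm_add_le _ _).trans (add_le_add ?_ hw)
  rwa [norm_mul, hc, one_mul]

theorem le_norm_correlation_of_mem [DecidableEq ι] {k₀ : ι} (hk₀ : k₀ ∈ s)
    (hcol : ∑ r, A r k₀ ^ 2 = 1) (hw : ‖∑ r, (A r k₀ : ℂ) * w r‖ ≤ ζ) :
    ‖x k₀‖ - ((s.card : ℝ) - 1) * μ * X - ζ ≤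
      ‖∑ r, (A r k₀ : ℂ) * (c * ∑ k ∈ s, x k * (A r k : ℂ) + w r)‖ := by
  have hdiag : ∑ r, A r k₀ * A r k₀ = 1 := by simpa only [sq] using hcol
  have hcross := norm_sum_mul_ofReal_le (s.erase k₀) x
    (fun k hk => hμ k₀ k (ne_of_mem_erase hk).symm) fun k hk => hx k (mem_of_mem_erase hk)
  have hcard : ((s.erase k₀).card : ℝ) = s.card - 1 := by
    rw [card_erase_of_mem hk₀, Nat.cast_sub (card_pos.mpr ⟨k₀, hk₀⟩), Nat.cast_one]
  rw [hcard] at hcross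
  rw [correlation_eq_gram_add_noise, ← add_sum_erase s _ hk₀, hdiag, ofReal_one, mul_one]
  set cross := ∑ k ∈ s.erase k₀, x k * ((∑ r, A r k₀ * A r k : ℝ) : ℂ)
  have hsignal := norm_sub_norm_le (x k₀) (-cross)
  have hnoisy := norm_sub_norm_le (c * (x k₀ + cross)) (-∑ r, (A r k₀ : ℂ) * w r)
  rw [norm_neg, sub_neg_eq_add] at hsignal hnoisy
  rw [norm_mul, hc, one_mul] at hnoisy
  linarith

end Correlation

theorem sum_lt_sum_of_coherence_bounds {π : Type*} (t : Finset π) {a b μ : π → ℝ}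
    {K X ζ : ℝ} (ha : ∀ p ∈ t, a p ≤ K * μ p * X + ζ)
    (hb : ∀ p ∈ t, X - (K - 1) * μ p * X - ζ ≤ b p)
    (h : t.card * X - 2 * t.card * ζ - (2 * K - 1) * (∑ p ∈ t, μ p) * X > 0) :
    ∑ p ∈ t, a p < ∑ p ∈ t, b p := by
  have hsum_a := sum_le_sum ha
  have hsum_b := sum_le_sum hb
  simp only [sum_add_distrib, sum_sub_distrib, ← sum_mul, ← mul_sum, sum_const,
    nsmul_eq_mul] at hsum_a hsum_b
  linarith

theorem pcmp_first_iteration_support_detection_general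
    {M N P K : ℕ} (A : Fin P → Matrix (Fin M) (Fin N) ℝ)
    (Λ : Finset (Fin N)) (hΛ : Λ.Nonempty) (hK : Λ.card = K)
    (x : Fin N → ℂ) (φ : Fin P → ℝ)
    (w : Fin P → Fin M → ℂ) (y : Fin P → Fin M → ℂ)
    (μ : Fin P → ℝ) (ζ : ℝ)
    (hcols : ∀ p j, ∑ m, (A p m j) ^ 2 = 1)
    (hμ : ∀ p, ∀ i j, i ≠ j → |∑ m, A p m i * A p m j| ≤ μ p)
    (hy : ∀ p m, y p m =
      Complex.exp (φ p * Complex.I) * (∑ k ∈ Λ, x k * (A p m k : ℂ)) + w p m)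
    (hw : ∀ p, ∀ i : Fin N, ‖∑ m, (A p m i : ℂ) * w p m‖ < ζ)
    (hcond : (P : ℝ) * (Λ.sup' hΛ fun k => ‖x k‖) -
        2 * (P : ℝ) * ζ -
        (2 * (K : ℝ) - 1) * (∑ p, μ p) *
          (Λ.sup' hΛ fun k => ‖x k‖) > 0) :
    ∀ i : Fin N, i ∉ Λ →
      Λ.sup' hΛ (fun j => ∑ p, ‖∑ m, (A p m j : ℂ) * y p m‖) >
        ∑ p, ‖∑ m, (A p m i : ℂ) * y p m‖ := by
  intro i hi
  obtain ⟨k₀, hk₀, hmax⟩ := Λ.exists_mem_eq_sup' hΛ fun k => ‖x k‖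
  have hx : ∀ k ∈ Λ, ‖x k‖ ≤ ‖x k₀‖ := fun k hk => hmax ▸ le_sup' (fun k => ‖x k‖) hk
  have hphase : ∀ p, ‖Complex.exp (φ p * Complex.I)‖ = 1 := fun p => norm_exp_ofReal_mul_I _
  simp only [hy]
  refine lt_of_lt_of_le ?_ (le_sup' _ hk₀)
  refine sum_lt_sum_of_coherence_bounds univ (fun p _ => ?_) (fun p _ => ?_)
    (by simpa [hmax] using hcond)
  · exact hK ▸ norm_correlation_le_of_notMem (A p) Λ x (w p) (hphase p) (hμ p) hx hi
      (hw p i).le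
  · exact hK ▸ le_norm_correlation_of_mem (A p) Λ x (w p) (hphase p) (hμ p) hx hk₀
      (hcols p k₀) (hw p k₀).le

/-- Deterministic core of Proposition 1: if
`P|x_max| − 2Pζ − (2K−1)(Σ_p μ_p)|x_max| > 0`, then the on-support correlation
maximum strictly exceeds every off-support correlation, so the first support
element selected by the PC-MP rule lies in the true support `Λ`. -/
theorem pcmp_first_iteration_support_detection
    {M N P K : ℕ} (A : Fin P → Matrix (Fin M) (Fin N) ℝ)
    (Λ : Finset (Fin N)) (hΛ : Λ.Nonempty) (hK : Λ.card = K) (hK1 : 1 ≤ K)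
    (x : Fin N → ℂ) (φ : Fin P → ℝ)
    (w : Fin P → Fin M → ℂ) (y : Fin P → Fin M → ℂ)
    (μ : Fin P → ℝ) (ζ : ℝ)
    (hcols : ∀ p j, ∑ m, (A p m j) ^ 2 = 1)
    (hμ : ∀ p, ∀ i j, i ≠ j → |∑ m, A p m i * A p m j| ≤ μ p)
    (hy : ∀ p m, y p m =
      Complex.exp (φ p * Complex.I) * (∑ k ∈ Λ, x k * (A p m k : ℂ)) + w p m)
    (hw : ∀ p, ∀ i : Fin N, ‖∑ m, (A p m i : ℂ) * w p m‖ < ζ)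
    (hcond : (P : ℝ) * (Λ.sup' hΛ fun k => ‖x k‖) -
        2 * (P : ℝ) * ζ -
        (2 * (K : ℝ) - 1) * (∑ p, μ p) *
          (Λ.sup' hΛ fun k => ‖x k‖) > 0) :
    ∀ i : Fin N, i ∉ Λ →
      Λ.sup' hΛ (fun j => ∑ p, ‖∑ m, (A p m j : ℂ) * y p m‖) >
        ∑ p, ‖∑ m, (A p m i : ℂ) * y p m‖ :=
  pcmp_first_iteration_support_detection_general A Λ hΛ hK x φ w y μ ζ hcols hμ hy hw hcond
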